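/- (Foiling the LLT by an initial distribution.) Suppose T is ergodic measure-preserving, (A_l) asymptotically rare with μ(μ(A_l)φ_{A_l} ≤ t) ⇒ F(t), F' continuous at s > 0 with F'(s) > 0, and k_l integers with μ(A_l)k_l → s. Then for every δ > 0 there exists B ∈ A with μ(B^c) < δ such that ν := μ_B satisfies ν(φ_{A_{l_j}} = k_{l_j}) = 0 for infinitely many indices l_j, while still ν(μ(A_l)φ_{A_l} ≤ t) ⇒ F(t). -/

import Mathlib

/-!
The probabilities `μ(φ_{A_l} = k_l)` tend to `0`: the event lies in the window
`μ(A_l)(k_l - 1) < μ(A_l) φ_{A_l} ≤ μ(A_l) k_l`, whose two endpoints both tend to `s`, a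
continuity point of `F`. Along a sparse subsequence these events have total mass below `δ`, and
`B` is the complement of their union.

The limit law survives conditioning on `B` because the sublevel sets
`E_l = {μ(A_l) φ_{A_l} ≤ t}` are asymptotically invariant: `E_l ∆ T^{-k} E_l` is covered by
`{φ_{A_l} ≤ k}` and a window of width `k μ(A_l)` above `t`. For an ergodic map, von Neumann's
mean ergodic theorem makes asymptotically invariant sets asymptotically independent of every fixed
set, so `μ(B ∩ E_l) - μ(B) μ(E_l) → 0`.
-/

open MeasureTheory ProbabilityTheory Filter Topology
open scoped ENNReal

/-- First hitting time of a set `A` under `T`. -/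
noncomputable def hitTime {X : Type*} (T : X → X) (A : Set X) (x : X) : ℕ∞ :=
  sInf ((↑) '' {n : ℕ | 1 ≤ n ∧ T^[n] x ∈ A})

open scoped symmDiff InnerProductSpace

section HitTime

variable {X : Type*} {T : X → X} {A : Set X} {x : X}

lemma hitTime_le_of_mem {n : ℕ} (hn : 1 ≤ n) (hx : T^[n] x ∈ A) : hitTime T A x ≤ n :=
  sInf_le ⟨n, ⟨hn, hx⟩, rfl⟩

lemma one_le_hitTime : 1 ≤ hitTime T A x :=
  le_sInf <| by rintro _ ⟨n, hn, rfl⟩; exact_mod_cast hn.1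

lemma hitTime_spec {n : ℕ} (h : hitTime T A x = n) : 1 ≤ n ∧ T^[n] x ∈ A := by
  have hne : ((↑) '' {n : ℕ | 1 ≤ n ∧ T^[n] x ∈ A} : Set ℕ∞).Nonempty := by
    by_contra he
    simp [hitTime, Set.not_nonempty_iff_eq_empty.1 he] at h
  obtain ⟨m, hm, hmn⟩ := csInf_mem hne
  exact Nat.cast_inj.1 (hmn.trans h) ▸ hm

lemma hitTime_le_natCast_iff {n : ℕ} :
    hitTime T A x ≤ n ↔ ∃ i, 1 ≤ i ∧ i ≤ n ∧ T^[i] x ∈ A := by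
  refine ⟨fun h => ?_, fun ⟨i, hi, hin, hx⟩ =>
    (hitTime_le_of_mem hi hx).trans (by exact_mod_cast hin)⟩
  obtain ⟨m, hm⟩ := ENat.ne_top_iff_exists.1 (ne_top_of_le_ne_top (ENat.natCast_ne_top n) h)
  obtain ⟨h1, hA⟩ := hitTime_spec hm.symm
  exact ⟨m, h1, by exact_mod_cast hm ▸ h, hA⟩

lemma hitTime_iterate_add {k : ℕ} (hk : k < hitTime T A x) :
    hitTime T A (T^[k] x) + k = hitTime T A x := by
  apply le_antisymm
  · cases h : hitTime T A x using ENat.recTopCoe with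
    | top => exact le_top
    | coe m =>
      obtain ⟨h1, hA⟩ := hitTime_spec h
      have hkm : k < m := by exact_mod_cast h ▸ hk
      have hle : hitTime T A (T^[k] x) ≤ (m - k : ℕ) :=
        hitTime_le_of_mem (by omega)
          (by rwa [← Function.iterate_add_apply, Nat.sub_add_cancel hkm.le])
      calc hitTime T A (T^[k] x) + k ≤ (m - k : ℕ) + k := by gcongr
        _ = m := by norm_cast; omega
  · cases h : hitTime T A (T^[k] x) using ENat.recTopCoe with
    | top => simp
    | coe m =>
      obtain ⟨h1, hA⟩ := hitTime_spec h
      exact_mod_cast hitTime_le_of_mem (by omega) (by rwa [Function.iterate_add_apply])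

lemma setOf_hitTime_le_eq_biUnion (n : ℕ) :
    {x | hitTime T A x ≤ n} = ⋃ i ∈ Finset.Icc 1 n, T^[i] ⁻¹' A := by
  ext x
  simp [hitTime_le_natCast_iff, and_assoc]

lemma symmDiff_preimage_iterate_subset (a c : ℝ≥0∞) (k : ℕ) :
    {x | a * hitTime T A x ≤ c} ∆ (T^[k] ⁻¹' {x | a * hitTime T A x ≤ c}) ⊆
      {x | hitTime T A x ≤ k} ∪ (fun x => a * hitTime T A x) ⁻¹' Set.Ioc c (c + a * k) := by
  intro x hx
  by_cases hk : hitTime T A x ≤ k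
  · exact Or.inl hk
  have hshift := congrArg ENat.toENNReal (hitTime_iterate_add (not_le.1 hk))
  rw [ENat.toENNReal_add, ENat.toENNReal_coe] at hshift
  have key : a * hitTime T A x = a * hitTime T A (T^[k] x) + a * k := by rw [← hshift, mul_add]
  rcases Set.mem_symmDiff.1 hx with ⟨hxE, hxT⟩ | ⟨hxT, hxE⟩
  · exact absurd ((le_self_add.trans key.ge).trans hxE) hxT
  · exact Or.inr ⟨not_le.1 hxE, key.trans_le (add_le_add_left hxT _)⟩

lemma setOf_mul_hitTime_le_eq_empty {a : ℝ≥0∞} (ha : a ≠ 0) {t : ℝ} (ht : t ≤ 0) :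
    {x | a * (hitTime T A x : ℝ≥0∞) ≤ ENNReal.ofReal t} = ∅ := by
  refine Set.eq_empty_of_forall_notMem fun x hx => ?_
  have h1 : (1 : ℝ≥0∞) ≤ hitTime T A x := by
    exact_mod_cast ENat.toENNReal_le.2 one_le_hitTime
  rw [Set.mem_ofPred_eq, ENNReal.ofReal_of_nonpos ht, nonpos_iff_eq_zero, mul_eq_zero] at hx
  exact hx.elim ha fun h => by simp [h] at h1

variable [MeasurableSpace X]

lemma measurableSet_hitTime_le (hT : Measurable T) (hA : MeasurableSet A) (n : ℕ) :
    MeasurableSet {x | hitTime T A x ≤ n} := by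
  rw [setOf_hitTime_le_eq_biUnion]
  exact Finset.measurableSet_biUnion _ fun i _ => hT.iterate i hA

lemma measurable_hitTime (hT : Measurable T) (hA : MeasurableSet A) :
    Measurable (hitTime T A) := by
  refine ENat.measurable_iff.2 fun n => ?_
  have : hitTime T A ⁻¹' {(n : ℕ∞)} =
      {x | hitTime T A x ≤ n} \ ⋃ m ∈ Finset.range n, {x | hitTime T A x ≤ m} := by
    ext x
    simp only [Set.mem_preimage, Set.mem_singleton_iff, Set.mem_sdiff, Set.mem_ofPred_eq,
      Set.mem_iUnion, Finset.mem_range, not_exists]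
    cases hitTime T A x using ENat.recTopCoe with
    | top => simp
    | coe m =>
      norm_cast
      exact ⟨by rintro rfl; exact ⟨le_rfl, fun _ _ => by omega⟩,
        fun ⟨_, h⟩ => by by_contra; exact h m (by omega) le_rfl⟩
  rw [this]
  exact (measurableSet_hitTime_le hT hA n).diff
    (Finset.measurableSet_biUnion _ fun m _ => measurableSet_hitTime_le hT hA m)

lemma measure_hitTime_le_le {μ : Measure X} (hT : MeasurePreserving T μ μ) (hA : MeasurableSet A)
    (n : ℕ) :
    μ {x | hitTime T A x ≤ n} ≤ n * μ A := by
  calc μ {x | hitTime T A x ≤ n} ≤ ∑ i ∈ Finset.Icc 1 n, μ (T^[i] ⁻¹' A) :=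
        setOf_hitTime_le_eq_biUnion (T := T) n ▸ measure_biUnion_finset_le _ _
    _ = n * μ A := by simp [(hT.iterate _).measure_preimage hA.nullMeasurableSet]

end HitTime

section ThresholdConvergence

variable {X : Type*} [MeasurableSpace X] {μ : Measure X} [IsFiniteMeasure μ]
  {Y : ℕ → X → ℝ≥0∞} {F : ℝ → ℝ}

lemma tendsto_measure_setOf_le_of_tendsto
    (hcvg : ∀ t : ℝ, ContinuousAt F t →
      Tendsto (fun l => (μ {x | Y l x ≤ ENNReal.ofReal t}).toReal) atTop (𝓝 (F t)))
    (hF : ∀ t : ℝ, 0 < t → ContinuousAt F t) {t : ℝ} (ht : 0 < t) {c : ℕ → ℝ≥0∞}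
    (hc : Tendsto c atTop (𝓝 (ENNReal.ofReal t))) :
    Tendsto (fun l => (μ {x | Y l x ≤ c l}).toReal) atTop (𝓝 (F t)) := by
  have hmono : ∀ {l a b}, a ≤ b →
      (μ {x | Y l x ≤ a}).toReal ≤ (μ {x | Y l x ≤ b}).toReal :=
    fun hab => ENNReal.toReal_mono (measure_ne_top _ _) (measure_mono fun _ hx => le_trans hx hab)
  have hnear : ∀ᶠ t' in 𝓝 t, 0 < t' := eventually_gt_nhds ht
  refine tendsto_order.2 ⟨fun b hb => ?_, fun b hb => ?_⟩
  · obtain ⟨t', ⟨ht'0, hbt'⟩, ht't⟩ := (((hnear.and ((hF t ht).eventually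
      (eventually_gt_nhds hb))).filter_mono nhdsWithin_le_nhds).and
        (self_mem_nhdsWithin (s := Set.Iio t))).exists
    filter_upwards [(hcvg t' (hF t' ht'0)).eventually (eventually_gt_nhds hbt'),
      hc.eventually (eventually_ge_nhds ((ENNReal.ofReal_lt_ofReal_iff ht).2 ht't))]
      with l h1 h2
    exact h1.trans_le (hmono h2)
  · obtain ⟨t', ⟨ht'0, hbt'⟩, ht't⟩ := (((hnear.and ((hF t ht).eventually
      (eventually_lt_nhds hb))).filter_mono nhdsWithin_le_nhds).and
        (self_mem_nhdsWithin (s := Set.Ioi t))).exists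
    filter_upwards [(hcvg t' (hF t' ht'0)).eventually (eventually_lt_nhds hbt'),
      hc.eventually (eventually_le_nhds ((ENNReal.ofReal_lt_ofReal_iff ht'0).2 ht't))]
      with l h1 h2
    exact (hmono h2).trans_lt h1

lemma tendsto_measure_preimage_Ioc_zero (hY : ∀ l, Measurable (Y l))
    (hcvg : ∀ t : ℝ, ContinuousAt F t →
      Tendsto (fun l => (μ {x | Y l x ≤ ENNReal.ofReal t}).toReal) atTop (𝓝 (F t)))
    (hF : ∀ t : ℝ, 0 < t → ContinuousAt F t) {t : ℝ} (ht : 0 < t)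
    {c c' : ℕ → ℝ≥0∞} (hc : Tendsto c atTop (𝓝 (ENNReal.ofReal t)))
    (hc' : Tendsto c' atTop (𝓝 (ENNReal.ofReal t))) (hle : ∀ l, c' l ≤ c l) :
    Tendsto (fun l => μ (Y l ⁻¹' Set.Ioc (c' l) (c l))) atTop (𝓝 0) := by
  have hdiff : ∀ l, (μ (Y l ⁻¹' Set.Ioc (c' l) (c l))).toReal =
      (μ {x | Y l x ≤ c l}).toReal - (μ {x | Y l x ≤ c' l}).toReal := by
    intro l
    have hsub : {x | Y l x ≤ c' l} ⊆ {x | Y l x ≤ c l} := fun _ hx => le_trans hx (hle l)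
    have hset : Y l ⁻¹' Set.Ioc (c' l) (c l) = {x | Y l x ≤ c l} \ {x | Y l x ≤ c' l} := by
      ext x; simp [and_comm]
    rw [hset, measure_sdiff hsub (measurableSet_le (hY l) measurable_const).nullMeasurableSet
      (measure_ne_top _ _), ENNReal.toReal_sub_of_le (measure_mono hsub) (measure_ne_top _ _)]
  rw [← ENNReal.tendsto_toReal_iff (fun _ => measure_ne_top _ _) ENNReal.zero_ne_top]
  simpa [Function.comp_def, hdiff] using
    (tendsto_measure_setOf_le_of_tendsto hcvg hF ht hc).sub
      (tendsto_measure_setOf_le_of_tendsto hcvg hF ht hc')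

end ThresholdConvergence

lemma continuousAt_of_eq_integral_of_antitoneOn {F F' : ℝ → ℝ}
    (hF' : AntitoneOn F' (Set.Ici 0))
    (hF : ∀ t : ℝ, 0 ≤ t → F t = ∫ s in (0:ℝ)..t, F' s) {t : ℝ} (ht : 0 < t) :
    ContinuousAt F t := by
  have hI : Set.uIcc 0 (t + 1) = Set.Icc 0 (t + 1) := Set.uIcc_of_le (by linarith)
  have hint : IntervalIntegrable F' volume 0 (t + 1) :=
    (hF'.mono (hI ▸ Set.Icc_subset_Ici_self)).intervalIntegrable
  refine ((intervalIntegral.continuousOn_primitive_interval' hint Set.left_mem_uIcc).continuousAt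
    (hI ▸ Icc_mem_nhds ht (lt_add_one t))).congr ?_
  filter_upwards [eventually_gt_nhds ht] with u hu
  exact (hF u hu.le).symm

lemma tendsto_zero_of_norm_le_add {ι F : Type*} [SeminormedAddCommGroup F] {L : Filter ι}
    {a : ι → F} {b : ℕ → ι → ℝ} {c : ℕ → ℝ} (hb : ∀ N, Tendsto (b N) L (𝓝 0))
    (hc : Tendsto c atTop (𝓝 0)) (h : ∀ N i, ‖a i‖ ≤ b N i + c N) :
    Tendsto a L (𝓝 0) := by
  refine Metric.tendsto_nhds.2 fun ε hε => ?_
  obtain ⟨N, hN⟩ := (hc.eventually (eventually_lt_nhds (half_pos hε))).exists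
  filter_upwards [(hb N).eventually (eventually_lt_nhds (half_pos hε))] with i hi
  rw [dist_zero_right]
  linarith [h N i]

section MeanErgodic

open Finset

variable {E : Type*} [NormedAddCommGroup E] [InnerProductSpace ℝ E]

lemma LinearIsometry.inner_iterate_sub_inner (U : E →ₗᵢ[ℝ] E) (k : ℕ) (f g : E) :
    ⟪g, U^[k] f⟫_ℝ - ⟪g, f⟫_ℝ = ⟪g - U^[k] g, U^[k] f⟫_ℝ := by
  rw [inner_sub_left, ← LinearIsometry.coe_pow, (U ^ k).inner_map_map]

lemma LinearIsometry.norm_inner_birkhoffAverage_sub_le (U : E →ₗᵢ[ℝ] E) {N : ℕ}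
    (hN : N ≠ 0) (f g : E) :
    ‖⟪g, birkhoffAverage ℝ U _root_.id N f - f⟫_ℝ‖ ≤
      ‖f‖ * ((N : ℝ)⁻¹ * ∑ k ∈ range N, ‖U^[k] g - g‖) := by
  have hA : birkhoffAverage ℝ U _root_.id N f - f =
      (N : ℝ)⁻¹ • ∑ k ∈ range N, (U^[k] f - f) := by
    simp [birkhoffAverage, birkhoffSum, sum_sub_distrib, smul_sub, ← Nat.cast_smul_eq_nsmul ℝ,
      smul_smul, hN]
  rw [hA, inner_smul_right, inner_sum, norm_mul, norm_inv, Real.norm_natCast, mul_left_comm,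
    mul_sum]
  refine mul_le_mul_of_nonneg_left ((norm_sum_le _ _).trans (sum_le_sum fun k _ => ?_))
    (by positivity)
  rw [inner_sub_right, U.inner_iterate_sub_inner, ← norm_sub_rev, mul_comm]
  calc _ ≤ ‖g - U^[k] g‖ * ‖U^[k] f‖ := norm_inner_le_norm _ _
    _ = _ := by rw [← LinearIsometry.coe_pow, LinearIsometry.norm_map]

theorem LinearIsometry.tendsto_inner_sub_of_tendsto_birkhoffAverage (U : E →ₗᵢ[ℝ] E)
    {f f₀ : E}    (hf : Tendsto (birkhoffAverage ℝ U _root_.id · f) atTop (𝓝 f₀))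
    {ι : Type*} {L : Filter ι} {g : ι → E} {C : ℝ} (hg : ∀ i, ‖g i‖ ≤ C)
    (hinv : ∀ k, Tendsto (fun i => ‖U^[k] (g i) - g i‖) L (𝓝 0)) :
    Tendsto (fun i => ⟪g i, f - f₀⟫_ℝ) L (𝓝 0) := by
  set A : ℕ → E := fun N => birkhoffAverage ℝ U _root_.id (N + 1) f
  refine tendsto_zero_of_norm_le_add
    (b := fun N i =>
      ‖f‖ * (((N + 1 : ℕ) : ℝ)⁻¹ * ∑ k ∈ range (N + 1), ‖U^[k] (g i) - g i‖))
    (c := fun N => C * ‖A N - f₀‖) (fun N => ?_) ?_ fun N i => ?_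
  · simpa using ((tendsto_finsetSum _ fun k _ => hinv k).const_mul _).const_mul ‖f‖
  · simpa using (((hf.comp (tendsto_add_atTop_nat 1)).sub_const f₀).norm).const_mul C
  · calc ‖⟪g i, f - f₀⟫_ℝ‖
        = ‖⟪g i, A N - f₀⟫_ℝ - ⟪g i, A N - f⟫_ℝ‖ := by
          rw [← inner_sub_right, sub_sub_sub_cancel_left]
      _ ≤ ‖g i‖ * ‖A N - f₀‖ + ‖⟪g i, A N - f⟫_ℝ‖ :=
          (norm_sub_le _ _).trans (add_le_add_left (norm_inner_le_norm _ _) _)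
      _ ≤ C * ‖A N - f₀‖ + _ := by gcongr; exact hg i
      _ ≤ _ := by
          rw [add_comm]
          gcongr
          exact U.norm_inner_birkhoffAverage_sub_le N.succ_ne_zero f (g i)

end MeanErgodic

section ErgodicL2

variable {X : Type*} [MeasurableSpace X] {μ : Measure X} [IsProbabilityMeasure μ] {T : X → X}

lemma Ergodic.eq_const_of_compMeasurePreserving_eq_Lp {p : ℝ≥0∞} (hT : Ergodic T μ)
    {w : Lp ℝ p μ} (hw : Lp.compMeasurePreserving T hT.toMeasurePreserving w = w) :
    ∃ c, w = Lp.const p μ c := by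
  obtain ⟨c, hc⟩ := hT.eq_const_of_compMeasurePreserving_eq (congrArg Subtype.val hw)
  exact ⟨c, Subtype.ext hc⟩

lemma MeasureTheory.Lp.compMeasurePreserving_const {p : ℝ≥0∞} (hT : MeasurePreserving T μ μ)
    (c : ℝ) :
    Lp.compMeasurePreserving T hT (Lp.const p μ c) = Lp.const p μ c :=
  Lp.ext <| (Lp.coeFn_compMeasurePreserving _ hT).trans <|
    (hT.quasiMeasurePreserving.ae_eq_comp (Lp.coeFn_const p μ c)).trans
      (Lp.coeFn_const p μ c).symm

lemma MeasureTheory.Lp.inner_const_left (c : ℝ) (f : Lp ℝ 2 μ) :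
    ⟪Lp.const 2 μ c, f⟫_ℝ = c * ∫ x, f x ∂μ := by
  rw [← indicatorConstLp_univ, L2.inner_indicatorConstLp_eq_inner_setIntegral,
    Measure.restrict_univ]
  simp [mul_comm]

theorem Ergodic.tendsto_birkhoffAverage_Lp_two (hT : Ergodic T μ) (f : Lp ℝ 2 μ) :
    Tendsto (birkhoffAverage ℝ (Lp.compMeasurePreservingₗᵢ ℝ T hT.toMeasurePreserving)
      _root_.id · f) atTop (𝓝 (Lp.const 2 μ (∫ x, f x ∂μ))) := by
  set U : Lp ℝ 2 μ →L[ℝ] Lp ℝ 2 μ :=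
    (Lp.compMeasurePreservingₗᵢ ℝ T hT.toMeasurePreserving).toContinuousLinearMap
  convert U.tendsto_birkhoffAverage_orthogonalProjection
    (LinearIsometry.norm_toContinuousLinearMap_le _) f using 2
  · rfl
  rw [Submodule.coe_orthogonalProjectionOnto_apply]
  refine (Submodule.eq_starProjection_of_mem_of_inner_eq_zero
    (Lp.compMeasurePreserving_const _ _) fun w hw => ?_).symm
  obtain ⟨c, rfl⟩ := hT.eq_const_of_compMeasurePreserving_eq_Lp hw
  rw [inner_sub_left, real_inner_comm, Lp.inner_const_left, Lp.inner_const_left,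
    integral_congr_ae (Lp.coeFn_const 2 μ _)]
  simp [mul_comm]

lemma MeasureTheory.norm_indicatorConstLp_one_le {s : Set X} (hs : MeasurableSet s) :
    ‖indicatorConstLp 2 hs (measure_ne_top μ s) (1 : ℝ)‖ ≤ 1 :=
  norm_indicatorConstLp_le.trans <| by
    simpa using
      Real.rpow_le_one measureReal_nonneg measureReal_le_one (by norm_num : (0:ℝ) ≤ 1 / 2)

theorem Ergodic.tendsto_measureReal_inter_sub_mul (hT : Ergodic T μ) {C : Set X}
    (hC : MeasurableSet C) {ι : Type*} {L : Filter ι} {E : ι → Set X}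
    (hE : ∀ i, MeasurableSet (E i))
    (hinv : ∀ k, Tendsto (fun i => μ (E i ∆ (T^[k] ⁻¹' E i))) L (𝓝 0)) :
    Tendsto (fun i => μ.real (C ∩ E i) - μ.real C * μ.real (E i)) L (𝓝 0) := by
  set U : Lp ℝ 2 μ →ₗᵢ[ℝ] Lp ℝ 2 μ :=
    Lp.compMeasurePreservingₗᵢ ℝ T hT.toMeasurePreserving
  have hU : ∀ k {s : Set X} (hs : MeasurableSet s),
      U^[k] (indicatorConstLp 2 hs (measure_ne_top μ s) (1 : ℝ)) =
        indicatorConstLp 2 (hs.preimage (hT.measurable.iterate k)) (measure_ne_top μ _) 1 := by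
    intro k s hs
    exact congrFun (Lp.compMeasurePreserving_iterate hT.toMeasurePreserving k) _
  have hinv' : ∀ k, Tendsto (fun i => ‖U^[k] (indicatorConstLp 2 (hE i) (measure_ne_top μ _) 1)
      - indicatorConstLp 2 (hE i) (measure_ne_top μ _) (1 : ℝ)‖) L (𝓝 0) := by
    intro k
    simp_rw [hU, ← dist_eq_norm, dist_indicatorConstLp_eq_norm,
      norm_indicatorConstLp two_ne_zero ENNReal.ofNat_ne_top, symmDiff_comm]
    simpa [measureReal_def] using
      (((ENNReal.tendsto_toReal ENNReal.zero_ne_top).comp (hinv k)).rpow_const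
        (Or.inr (by norm_num : (0:ℝ) ≤ 1 / 2))).const_mul 1
  convert U.tendsto_inner_sub_of_tendsto_birkhoffAverage
    (hT.tendsto_birkhoffAverage_Lp_two (indicatorConstLp 2 hC (measure_ne_top μ C) 1))
    (fun i => norm_indicatorConstLp_one_le (hE i)) hinv' using 2 with i
  rw [inner_sub_right, L2.real_inner_indicatorConstLp_one_indicatorConstLp_one, real_inner_comm,
    Lp.inner_const_left]
  simp [integral_indicatorConstLp, Set.inter_comm]

end ErgodicL2

section HitTimeLimits

variable {X : Type*} [MeasurableSpace X] {μ : Measure X} [IsProbabilityMeasure μ] {T : X → X}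
  {A : ℕ → Set X} {F : ℝ → ℝ}

lemma measurable_mul_hitTime {A : Set X} (hT : Measurable T) (hA : MeasurableSet A)
    (a : ℝ≥0∞) :
    Measurable fun x => a * (hitTime T A x : ℝ≥0∞) :=
  measurable_const.mul (Measurable.of_discrete.comp (measurable_hitTime hT hA))

lemma tendsto_measure_hitTime_eq_zero (hT : Measurable T) (hA : ∀ l, MeasurableSet (A l))
    (hpos : ∀ l, 0 < μ (A l)) (hrare : Tendsto (fun l => μ (A l)) atTop (𝓝 0))
    (hcvg : ∀ t : ℝ, ContinuousAt F t →
      Tendsto (fun l =>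
        (μ {x | μ (A l) * (hitTime T (A l) x : ℝ≥0∞) ≤ ENNReal.ofReal t}).toReal)
        atTop (𝓝 (F t)))
    (hF : ∀ t : ℝ, 0 < t → ContinuousAt F t) {s : ℝ} (hs : 0 < s) {k : ℕ → ℕ}
    (hk : ∀ l, 1 ≤ k l)
    (hks : Tendsto (fun l => (μ (A l)).toReal * (k l : ℝ)) atTop (𝓝 s)) :
    Tendsto (fun l => μ {x | hitTime T (A l) x = k l}) atTop (𝓝 0) := by
  have hc : Tendsto (fun l => μ (A l) * k l) atTop (𝓝 (ENNReal.ofReal s)) := by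
    refine (ENNReal.tendsto_ofReal hks).congr fun l => ?_
    rw [ENNReal.ofReal_mul ENNReal.toReal_nonneg, ENNReal.ofReal_toReal (measure_ne_top μ _),
      ENNReal.ofReal_natCast]
  have hc' : Tendsto (fun l => μ (A l) * (k l - 1 : ℕ)) atTop (𝓝 (ENNReal.ofReal s)) := by
    have h := ENNReal.Tendsto.sub hc hrare (.inl ENNReal.ofReal_ne_top)
    rw [tsub_zero] at h
    refine h.congr fun l => ?_
    rw [ENNReal.natCast_sub, ENNReal.mul_sub fun _ _ => measure_ne_top μ _, Nat.cast_one, mul_one]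
  refine tendsto_of_tendsto_of_tendsto_of_le_of_le tendsto_const_nhds
    (tendsto_measure_preimage_Ioc_zero (fun l => measurable_mul_hitTime hT (hA l) _) hcvg hF hs
      hc hc' fun l => by gcongr; omega) (fun _ => zero_le) fun l => measure_mono fun x hx => ?_
  simp only [Set.mem_ofPred_eq, Set.mem_preimage, Set.mem_Ioc] at hx ⊢
  rw [hx, ENat.toENNReal_coe]
  refine ⟨ENNReal.mul_lt_mul_right (hpos l).ne' (measure_ne_top μ _) ?_, le_rfl⟩
  have := hk l
  norm_cast
  omega

lemma tendsto_measure_symmDiff_preimage_iterate (hT : MeasurePreserving T μ μ)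
    (hA : ∀ l, MeasurableSet (A l)) (hrare : Tendsto (fun l => μ (A l)) atTop (𝓝 0))
    (hcvg : ∀ t : ℝ, ContinuousAt F t →
      Tendsto (fun l =>
        (μ {x | μ (A l) * (hitTime T (A l) x : ℝ≥0∞) ≤ ENNReal.ofReal t}).toReal)
        atTop (𝓝 (F t)))
    (hF : ∀ t : ℝ, 0 < t → ContinuousAt F t) {t : ℝ} (ht : 0 < t) (k : ℕ) :
    Tendsto (fun l => μ ({x | μ (A l) * (hitTime T (A l) x : ℝ≥0∞) ≤ ENNReal.ofReal t} ∆
      (T^[k] ⁻¹' {x | μ (A l) * (hitTime T (A l) x : ℝ≥0∞) ≤ ENNReal.ofReal t})))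
      atTop (𝓝 0) := by
  have hk : Tendsto (fun l => μ (A l) * k) atTop (𝓝 0) := by
    simpa using ENNReal.Tendsto.mul_const hrare (.inr (ENNReal.natCast_ne_top k))
  have hwindow := tendsto_measure_preimage_Ioc_zero
    (fun l => measurable_mul_hitTime hT.measurable (hA l) _) hcvg hF ht
    (c' := fun _ => ENNReal.ofReal t) (by simpa using tendsto_const_nhds.add hk)
    tendsto_const_nhds fun l => le_self_add
  refine tendsto_of_tendsto_of_tendsto_of_le_of_le tendsto_const_nhds
    (by simpa using hk.add hwindow)
    (fun _ => zero_le) fun l => ?_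
  exact (measure_mono (symmDiff_preimage_iterate_subset _ _ k)).trans <|
    (measure_union_le _ _).trans
      (add_le_add_left ((measure_hitTime_le_le hT (hA l) k).trans_eq (mul_comm _ _)) _)

lemma tendsto_cond_measure_mul_hitTime_le (hT : Ergodic T μ) (hA : ∀ l, MeasurableSet (A l))
    (hpos : ∀ l, 0 < μ (A l)) (hrare : Tendsto (fun l => μ (A l)) atTop (𝓝 0))
    (hcvg : ∀ t : ℝ, ContinuousAt F t →
      Tendsto (fun l =>
        (μ {x | μ (A l) * (hitTime T (A l) x : ℝ≥0∞) ≤ ENNReal.ofReal t}).toReal)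
        atTop (𝓝 (F t)))
    (hF : ∀ t : ℝ, 0 < t → ContinuousAt F t) {B : Set X} (hB : MeasurableSet B)
    (hB0 : μ B ≠ 0) {t : ℝ} (hFt : ContinuousAt F t) :
    Tendsto (fun l =>
        ((μ[|B]) {x | μ (A l) * (hitTime T (A l) x : ℝ≥0∞) ≤ ENNReal.ofReal t}).toReal)
      atTop (𝓝 (F t)) := by
  rcases le_or_gt t 0 with ht | ht
  · simpa [setOf_mul_hitTime_le_eq_empty (hpos _).ne' ht] using hcvg t hFt
  have hcorr := hT.tendsto_measureReal_inter_sub_mul hB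
    (fun l => measurableSet_le (measurable_mul_hitTime hT.measurable (hA l) _) measurable_const)
    (tendsto_measure_symmDiff_preimage_iterate hT.toMeasurePreserving hA hrare hcvg hF ht)
  have hB0' : (μ B).toReal ≠ 0 := ENNReal.toReal_ne_zero.2 ⟨hB0, measure_ne_top μ B⟩
  simpa [cond_apply hB, measureReal_def, inv_mul_cancel_left₀ hB0'] using
    (hcorr.add ((hcvg t hFt).const_mul (μ.real B))).const_mul (μ.real B)⁻¹

end HitTimeLimits

lemma ENNReal.exists_strictMono_tsum_lt_of_tendsto_zero {u : ℕ → ℝ≥0∞}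
    (hu : Tendsto u atTop (𝓝 0)) {ε : ℝ≥0∞} (hε : ε ≠ 0) :
    ∃ φ : ℕ → ℕ, StrictMono φ ∧ ∑' j, u (φ j) < ε := by
  obtain ⟨ε', hε'pos, hε'sum⟩ := ENNReal.exists_pos_sum_of_countable' hε ℕ
  obtain ⟨φ, hφ, hφε'⟩ := extraction_forall_of_eventually fun j =>
    hu.eventually (eventually_lt_nhds (hε'pos j))
  exact ⟨φ, hφ, (ENNReal.tsum_le_tsum fun j => (hφε' j).le).trans_lt hε'sum⟩

theorem stmt_10_general {X : Type*} [MeasurableSpace X] {μ : Measure X} [IsProbabilityMeasure μ]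
    {T : X → X} (hT : Ergodic T μ) {A : ℕ → Set X} (hmeas : ∀ l, MeasurableSet (A l))
    (hpos : ∀ l, 0 < μ (A l)) (hrare : Tendsto (fun l => μ (A l)) atTop (𝓝 0))
    {F F' : ℝ → ℝ}
    (hcvg : ∀ t : ℝ, ContinuousAt F t →
      Tendsto (fun l =>
          (μ {x | μ (A l) * ((hitTime T (A l) x : ℕ∞) : ℝ≥0∞) ≤ ENNReal.ofReal t}).toReal)
        atTop (𝓝 (F t)))
    (hF'anti : AntitoneOn F' (Set.Ici 0))
    (hdens : ∀ t : ℝ, 0 ≤ t → F t = ∫ s in (0:ℝ)..t, F' s)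
    {s : ℝ} (hs : 0 < s)
    {k : ℕ → ℕ} (hk1 : ∀ l, 1 ≤ k l)
    (hks : Tendsto (fun l => (μ (A l)).toReal * (k l : ℝ)) atTop (𝓝 s)) :
    ∀ δ : ℝ, 0 < δ → ∃ B : Set X, MeasurableSet B ∧ μ Bᶜ < ENNReal.ofReal δ ∧
      {l : ℕ | (μ[|B]) {x | hitTime T (A l) x = (k l : ℕ∞)} = 0}.Infinite ∧
      (∀ t : ℝ, ContinuousAt F t →
        Tendsto (fun l =>
            ((μ[|B]) {x | μ (A l) * ((hitTime T (A l) x : ℕ∞) : ℝ≥0∞) ≤ ENNReal.ofReal t}).toReal)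
          atTop (𝓝 (F t))) := by
  intro δ hδ
  have hF t (ht : 0 < t) : ContinuousAt F t :=
    continuousAt_of_eq_integral_of_antitoneOn hF'anti hdens ht
  obtain ⟨φ, hφ, hsum⟩ := ENNReal.exists_strictMono_tsum_lt_of_tendsto_zero
    (tendsto_measure_hitTime_eq_zero hT.measurable hmeas hpos hrare hcvg hF hs hk1 hks)
    (ε := min (ENNReal.ofReal δ) 1) (by simp [hδ])
  set B := ⋂ j, {x | hitTime T (A (φ j)) x ≠ k (φ j)}
  have hB : MeasurableSet B := .iInter fun j =>
    measurable_hitTime hT.measurable (hmeas _) (measurableSet_singleton _).compl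
  have hBc : μ Bᶜ < min (ENNReal.ofReal δ) 1 := by
    refine lt_of_le_of_lt ?_ hsum
    simpa [B, Set.compl_iInter, Set.compl_ofPred] using
      measure_iUnion_le (μ := μ) fun j => {x | hitTime T (A (φ j)) x = k (φ j)}
  have hB0 : μ B ≠ 0 := fun h => (hBc.trans_le (min_le_right _ _)).ne <| by
    rw [prob_compl_eq_one_sub hB, h, tsub_zero]
  refine ⟨B, hB, hBc.trans_le (min_le_left _ _), ?_, fun t hFt =>
    tendsto_cond_measure_mul_hitTime_le hT hmeas hpos hrare hcvg hF hB hB0 hFt⟩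
  refine Set.infinite_of_injective_forall_mem hφ.injective fun j => ?_
  have hdisj : B ∩ {x | hitTime T (A (φ j)) x = k (φ j)} = ∅ :=
    Set.eq_empty_of_forall_notMem fun x hx => Set.mem_iInter.1 hx.1 j hx.2
  simp [cond_apply hB, hdisj]

/-- Initial distributions foiling the LLT for hitting times: under distributional
convergence to `F` with `F'` continuous and positive at `s`, and `μ(A l)·k l → s`, for every
`δ > 0` there is `B` with `μ(Bᶜ) < δ` such that `ν := μ_B` still satisfies the
distributional limit theorem, while `ν(φ_{A l} = k l) = 0` for infinitely many `l`. -/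
theorem stmt_10 {X : Type*} [MeasurableSpace X] {μ : Measure X} [IsProbabilityMeasure μ]
    {T : X → X} (hT : Ergodic T μ) {A : ℕ → Set X} (hmeas : ∀ l, MeasurableSet (A l))
    (hpos : ∀ l, 0 < μ (A l)) (hrare : Tendsto (fun l => μ (A l)) atTop (𝓝 0))
    {F F' : ℝ → ℝ}
    (hcvg : ∀ t : ℝ, ContinuousAt F t →
      Tendsto (fun l =>
          (μ {x | μ (A l) * ((hitTime T (A l) x : ℕ∞) : ℝ≥0∞) ≤ ENNReal.ofReal t}).toReal)
        atTop (𝓝 (F t)))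
    (hF'anti : AntitoneOn F' (Set.Ici 0))
    (hdens : ∀ t : ℝ, 0 ≤ t → F t = ∫ s in (0:ℝ)..t, F' s)
    {s : ℝ} (hs : 0 < s) (hF'cont : ContinuousAt F' s) (hF'pos : 0 < F' s)
    {k : ℕ → ℕ} (hk1 : ∀ l, 1 ≤ k l)
    (hks : Tendsto (fun l => (μ (A l)).toReal * (k l : ℝ)) atTop (𝓝 s)) :
    ∀ δ : ℝ, 0 < δ → ∃ B : Set X, MeasurableSet B ∧ μ Bᶜ < ENNReal.ofReal δ ∧
      {l : ℕ | (μ[|B]) {x | hitTime T (A l) x = (k l : ℕ∞)} = 0}.Infinite ∧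
      (∀ t : ℝ, ContinuousAt F t →
        Tendsto (fun l =>
            ((μ[|B]) {x | μ (A l) * ((hitTime T (A l) x : ℕ∞) : ℝ≥0∞) ≤ ENNReal.ofReal t}).toReal)
          atTop (𝓝 (F t))) :=
  stmt_10_general hT hmeas hpos hrare hcvg hF'anti hdens hs hk1 hks
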